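/- arXiv:2507.02889 — 3 statements merged into one kernel-verified Lean document; each statement's English description precedes it below -/
import Mathlib

section
/- Let α > 0, β > 0, γ > 1, λ ∈ ℝ, and let s > 0 be a real number. Then ∫₀^∞ e^{−st} · (∑_{k=0}^∞ k · λ^k · t^{αk+β−1} · (ln t − γ · ψ(αk+β)) / Γ(αk+β)^γ) dt = − (1/s^β) · ∑_{k=0}^∞ k · (λ · s^{−α})^k · (ln s + (γ−1) · ψ(αk+β)) / Γ(αk+β)^{γ−1}. (The integrand series is the term-by-term derivative with respect to α of t^{β−1} F^{(γ)}_{α,β}(λ t^α).) -/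
open Real MeasureTheory

/-- The digamma function `ψ(x) = the logarithmic derivative of Γ`, i.e. the derivative of `log ∘ Γ`. -/
noncomputable def digamma (x : ℝ) : ℝ := deriv (fun y : ℝ => Real.log (Real.Gamma y)) x

/-!
Integrate term by term. With `a = α k + β`, substituting `u = s t` in Euler's integral and in
its derivative `Γ(a) ψ(a) = ∫₀^∞ e^{-u} u^{a-1} log u du` gives
`∫₀^∞ e^{-st} t^{a-1} (log t - γ ψ(a)) dt = -s^{-a} Γ(a) (log s + (γ - 1) ψ(a))`,
which, multiplied by `k λ^k / Γ(a)^γ`, is the `k`-th term of the right-hand side.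
The exchange of sum and integral needs the integrals of the absolute values to be summable.
Through `|log t| ≤ (t^ε + t^{-ε}) / ε` they, and `|ψ(a)| Γ(a)`, are bounded by values `Γ(a ± ε)`,
so up to constants the `k`-th one is at most `k q^k a Γ(a)^{1-γ}` with `q = |λ| s^{-α}`.
This decays faster than any geometric sequence, because log-convexity of `Γ` gives
`Γ(x + α) ≥ Γ(x) (x - 1)^α`.
-/

open Set Filter Topology

section LaplaceIntegrals

variable {a s : ℝ}

lemma abs_log_le_rpow_add_rpow_neg_div {t ε : ℝ} (ht : 0 < t) (hε : 0 < ε) :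
    |log t| ≤ (t ^ ε + t ^ (-ε)) / ε := by
  have hle := log_le_rpow_div ht.le hε
  have hge := log_le_rpow_div (inv_pos.mpr ht).le hε
  rw [log_inv, inv_rpow ht.le, ← rpow_neg ht.le] at hge
  rw [abs_le, add_div]
  constructor <;> linarith [(div_pos (rpow_pos_of_pos ht ε) hε).le,
    (div_pos (rpow_pos_of_pos ht (-ε)) hε).le]

lemma integrableOn_rpow_mul_exp_neg_mul (ha : 0 < a) (hs : 0 < s) :
    IntegrableOn (fun t ↦ t ^ (a - 1) * exp (-(s * t))) (Ioi 0) := by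
  simpa [neg_mul] using integrableOn_rpow_mul_exp_neg_mul_rpow (p := 1) (by linarith) one_pos hs

lemma abs_rpow_mul_exp_neg_mul_mul_log_le {t ε : ℝ} (ht : 0 < t) (hε : 0 < ε) :
    |t ^ (a - 1) * exp (-(s * t)) * log t|
      ≤ (t ^ (a + ε - 1) * exp (-(s * t)) + t ^ (a - ε - 1) * exp (-(s * t))) / ε := by
  have hsplit : ∀ c, t ^ (a + c - 1) = t ^ (a - 1) * t ^ c := fun c ↦ by
    rw [← rpow_add ht]; ring_nf
  rw [hsplit, sub_eq_add_neg a ε, hsplit, abs_mul, abs_of_pos (by positivity)]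
  calc t ^ (a - 1) * exp (-(s * t)) * |log t|
      ≤ t ^ (a - 1) * exp (-(s * t)) * ((t ^ ε + t ^ (-ε)) / ε) := by
        gcongr; exact abs_log_le_rpow_add_rpow_neg_div ht hε
    _ = _ := by ring

lemma integrableOn_rpow_mul_exp_neg_mul_mul_log (ha : 0 < a) (hs : 0 < s) :
    IntegrableOn (fun t ↦ t ^ (a - 1) * exp (-(s * t)) * log t) (Ioi 0) := by
  have hdom := ((integrableOn_rpow_mul_exp_neg_mul (a := a + a / 2) (by linarith) hs).add
    (integrableOn_rpow_mul_exp_neg_mul (a := a - a / 2) (by linarith) hs)).div_const (a / 2)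
  refine hdom.mono' (by fun_prop) ?_
  filter_upwards [ae_restrict_mem measurableSet_Ioi] with t ht
  exact abs_rpow_mul_exp_neg_mul_mul_log_le ht (half_pos ha)

lemma integral_abs_rpow_mul_exp_neg_mul_mul_log_le {ε : ℝ} (hs : 0 < s) (hε : 0 < ε)
    (hεa : ε < a) :
    ∫ t in Ioi 0, |t ^ (a - 1) * exp (-(s * t)) * log t|
      ≤ ((1 / s) ^ (a + ε) * Gamma (a + ε) + (1 / s) ^ (a - ε) * Gamma (a - ε)) / ε := by
  have hplus := integrableOn_rpow_mul_exp_neg_mul (a := a + ε) (by linarith) hs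
  have hminus := integrableOn_rpow_mul_exp_neg_mul (a := a - ε) (by linarith) hs
  calc ∫ t in Ioi 0, |t ^ (a - 1) * exp (-(s * t)) * log t|
      ≤ ∫ t in Ioi 0,
          (t ^ (a + ε - 1) * exp (-(s * t)) + t ^ (a - ε - 1) * exp (-(s * t))) / ε :=
        setIntegral_mono_on (integrableOn_rpow_mul_exp_neg_mul_mul_log (by linarith) hs).abs
          ((hplus.add hminus).div_const ε) measurableSet_Ioi
          fun t ht ↦ abs_rpow_mul_exp_neg_mul_mul_log_le ht hε
    _ = _ := by
        rw [integral_div, integral_add hplus hminus,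
          integral_rpow_mul_exp_neg_mul_Ioi (by linarith) hs,
          integral_rpow_mul_exp_neg_mul_Ioi (by linarith) hs]

lemma hasDerivAt_Gamma_of_pos (ha : 0 < a) :
    HasDerivAt Gamma (∫ t in Ioi 0, t ^ (a - 1) * exp (-t) * log t) a := by
  have hGamma : Complex.Gamma =ᶠ[𝓝 (a : ℂ)] Complex.GammaIntegral := by
    filter_upwards [(isOpen_lt continuous_const Complex.continuous_re).mem_nhds
      (by simpa using ha : (a : ℂ) ∈ {z : ℂ | 0 < z.re})] with z hz
    exact Complex.Gamma_eq_integral hz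
  have hreal := ((Complex.hasDerivAt_GammaIntegral (by simpa using ha)).congr_of_eventuallyEq
    hGamma).real_of_complex
  rw [show (fun x : ℝ ↦ (Complex.Gamma x).re) = Gamma from rfl] at hreal
  convert hreal using 1
  rw [← Complex.ofReal_re (∫ t in Ioi 0, t ^ (a - 1) * exp (-t) * log t), ← integral_complex_ofReal]
  congr 1
  refine setIntegral_congr_fun measurableSet_Ioi fun t ht ↦ ?_
  rw [← Complex.ofReal_one, ← Complex.ofReal_sub, ← Complex.ofReal_cpow (le_of_lt ht)]
  push_cast
  ring

lemma Gamma_mul_digamma_eq_integral (ha : 0 < a) :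
    Gamma a * digamma a = ∫ t in Ioi 0, t ^ (a - 1) * exp (-t) * log t := by
  have hderiv := hasDerivAt_Gamma_of_pos ha
  rw [digamma, (hderiv.log (Gamma_pos_of_pos ha).ne').deriv]
  field_simp [(Gamma_pos_of_pos ha).ne']

lemma integral_rpow_mul_exp_neg_mul_mul_log (ha : 0 < a) (hs : 0 < s) :
    ∫ t in Ioi 0, t ^ (a - 1) * exp (-(s * t)) * log t
      = (1 / s) ^ a * Gamma a * (digamma a - log s) := by
  -- substitute `u = s t`, so that `log t = log u - log s`
  set g : ℝ → ℝ := fun u ↦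
    s ^ (1 - a) * (u ^ (a - 1) * exp (-u) * log u - log s * (u ^ (a - 1) * exp (-u)))
  have hg : ∀ t ∈ Ioi (0 : ℝ), t ^ (a - 1) * exp (-(s * t)) * log t = g (s * t) := by
    intro t ht
    have hst : s ^ (1 - a) * (s * t) ^ (a - 1) = t ^ (a - 1) := by
      rw [mul_rpow hs.le (le_of_lt ht), ← mul_assoc, ← rpow_add hs]
      norm_num
    simp only [g, log_mul hs.ne' (ne_of_gt ht), ← hst]
    ring
  have hlog := integrableOn_rpow_mul_exp_neg_mul_mul_log (s := 1) ha one_pos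
  have hpow := (integrableOn_rpow_mul_exp_neg_mul (s := 1) ha one_pos).const_mul (log s)
  have hGamma : ∫ t in Ioi 0, t ^ (a - 1) * exp (-t) = Gamma a := by
    simpa using integral_rpow_mul_exp_neg_mul_Ioi ha one_pos
  simp only [one_mul] at hlog hpow
  rw [setIntegral_congr_fun measurableSet_Ioi hg, integral_comp_mul_left_Ioi g 0 hs, mul_zero,
    integral_const_mul, integral_sub hlog hpow, integral_const_mul,
    ← Gamma_mul_digamma_eq_integral ha, hGamma, smul_eq_mul]
  have hpow_s : s⁻¹ * s ^ (1 - a) = (1 / s) ^ a := by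
    rw [← rpow_neg_one, ← rpow_add hs, one_div, inv_rpow hs.le, ← rpow_neg hs.le]
    ring_nf
  linear_combination (Gamma a * (digamma a - log s)) * hpow_s

lemma abs_digamma_mul_Gamma_le {ε : ℝ} (hε : 0 < ε) (hεa : ε < a) :
    |digamma a| * Gamma a ≤ (Gamma (a + ε) + Gamma (a - ε)) / ε := by
  have hbound := integral_abs_rpow_mul_exp_neg_mul_mul_log_le one_pos hε hεa
  simp only [one_mul, div_one, one_rpow] at hbound
  calc |digamma a| * Gamma a = |Gamma a * digamma a| := by
        rw [abs_mul, abs_of_pos (Gamma_pos_of_pos (hε.trans hεa)), mul_comm]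
    _ ≤ _ := by
        rw [Gamma_mul_digamma_eq_integral (hε.trans hεa)]
        exact (abs_integral_le_integral_abs).trans hbound

end LaplaceIntegrals

section GammaGrowth

lemma Gamma_mul_sub_one_rpow_le_Gamma_add {x α : ℝ} (hx : 1 < x) (hα : 0 < α) :
    Gamma x * (x - 1) ^ α ≤ Gamma (x + α) := by
  have hx0 : 0 < x - 1 := by linarith
  have hΓ : 0 < Gamma (x - 1) := Gamma_pos_of_pos hx0
  -- the slopes of the convex function `log ∘ Γ` increase: from `x - 1` to `x` it is `log (x - 1)`
  have hslope := convexOn_log_Gamma.slope_mono_adjacent (mem_Ioi.mpr hx0)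
    (mem_Ioi.mpr (by linarith : 0 < x + α)) (by linarith : x - 1 < x) (by linarith : x < x + α)
  have hrec : Gamma x = (x - 1) * Gamma (x - 1) := by
    simpa using Gamma_add_one hx0.ne'
  simp only [Function.comp_apply, hrec, log_mul hx0.ne' hΓ.ne', sub_sub_cancel, div_one,
    add_sub_cancel_left, le_div_iff₀ hα] at hslope
  rw [← exp_log (Gamma_pos_of_pos (by linarith : 0 < x + α)), rpow_def_of_pos hx0, hrec,
    ← exp_log (mul_pos hx0 hΓ), ← exp_add, log_mul hx0.ne' hΓ.ne']
  exact exp_le_exp.mpr (by linarith)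

lemma tendsto_Gamma_div_Gamma_add_atTop {α : ℝ} (hα : 0 < α) :
    Tendsto (fun x ↦ Gamma x / Gamma (x + α)) atTop (𝓝 0) := by
  have hlim : Tendsto (fun x : ℝ ↦ (x - 1) ^ (-α)) atTop (𝓝 0) :=
    (tendsto_rpow_neg_atTop hα).comp (tendsto_atTop_add_const_right _ (-1) tendsto_id)
  refine tendsto_of_tendsto_of_tendsto_of_le_of_le' tendsto_const_nhds hlim ?_ ?_
  · filter_upwards [eventually_gt_atTop 0] with x hx
    exact div_nonneg (Gamma_pos_of_pos hx).le (Gamma_pos_of_pos (by linarith)).le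
  · filter_upwards [eventually_gt_atTop 1] with x hx
    have hx0 : 0 < x - 1 := by linarith
    rw [rpow_neg hx0.le, div_le_iff₀ (Gamma_pos_of_pos (by linarith)), inv_mul_eq_div,
      le_div_iff₀ (rpow_pos_of_pos hx0 α)]
    exact Gamma_mul_sub_one_rpow_le_Gamma_add hx hα

lemma Gamma_add_le_mul_Gamma {x δ : ℝ} (hx : 2 ≤ x + δ) (hδ : δ ≤ 1) :
    Gamma (x + δ) ≤ x * Gamma x := by
  rw [← Gamma_add_one (by linarith)]
  exact Gamma_strictMonoOn_Ici.monotoneOn hx (by simp only [mem_Ici]; linarith) (by linarith)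

lemma summable_natCast_mul_pow_mul_div_Gamma_rpow {α β γ q : ℝ} (hα : 0 < α) (hγ : 1 < γ)
    (hq : 0 ≤ q) :
    Summable fun k : ℕ ↦ k * q ^ k * (α * k + β) / Gamma (α * k + β) ^ (γ - 1) := by
  set a : ℕ → ℝ := fun k ↦ α * k + β
  have ha : Tendsto a atTop atTop :=
    tendsto_atTop_add_const_right _ β (tendsto_natCast_atTop_atTop.const_mul_atTop hα)
  set ρ : ℕ → ℝ := fun k ↦ 4 * q * (Gamma (a k) / Gamma (a k + α)) ^ (γ - 1)
  have hρ : Tendsto ρ atTop (𝓝 0) := by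
    have := (((tendsto_Gamma_div_Gamma_add_atTop hα).comp ha).rpow_const
      (Or.inr (by linarith : 0 ≤ γ - 1))).const_mul (4 * q)
    simpa [zero_rpow (by linarith : γ - 1 ≠ 0)] using this
  refine summable_of_ratio_norm_eventually_le (r := 1 / 2) (by norm_num) ?_
  filter_upwards [hρ.eventually (ge_mem_nhds (by norm_num : (0 : ℝ) < 1 / 2)),
    eventually_ge_atTop 1, ha.eventually_ge_atTop (max α 1)] with k hρk hk hak
  have hk1 : (1 : ℝ) ≤ k := by exact_mod_cast hk
  have haα : α ≤ a k := (le_max_left _ _).trans hak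
  have ha0 : 0 < a k := hα.trans_le haα
  have hΓ : 0 < Gamma (a k) := Gamma_pos_of_pos ha0
  have hΓα : 0 < Gamma (a k + α) := Gamma_pos_of_pos (by linarith)
  have hG : 0 ≤ k * q ^ k * a k / Gamma (a k) ^ (γ - 1) := by positivity
  have hratio : (k + 1 : ℝ) * q ^ (k + 1) * (a k + α) / Gamma (a k + α) ^ (γ - 1)
      ≤ ρ k * (k * q ^ k * a k / Gamma (a k) ^ (γ - 1)) := by
    have hX : 0 ≤ q ^ (k + 1) / Gamma (a k + α) ^ (γ - 1) := by positivity
    have hρG : ρ k * (k * q ^ k * a k / Gamma (a k) ^ (γ - 1))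
        = 4 * k * a k * (q ^ (k + 1) / Gamma (a k + α) ^ (γ - 1)) := by
      simp only [ρ, div_rpow hΓ.le hΓα.le]
      field_simp
      ring
    calc (k + 1 : ℝ) * q ^ (k + 1) * (a k + α) / Gamma (a k + α) ^ (γ - 1)
        = ((k + 1) * (a k + α)) * (q ^ (k + 1) / Gamma (a k + α) ^ (γ - 1)) := by ring
      _ ≤ (4 * k * a k) * (q ^ (k + 1) / Gamma (a k + α) ^ (γ - 1)) :=
        mul_le_mul_of_nonneg_right (by nlinarith) hX
      _ = _ := hρG.symm
  have hcast : α * ((k + 1 : ℕ) : ℝ) + β = a k + α := by push_cast; ring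
  rw [hcast, Nat.cast_succ, norm_of_nonneg (by positivity), norm_of_nonneg hG]
  exact hratio.trans (mul_le_mul_of_nonneg_right hρk hG)

lemma summable_natCast_mul_pow_mul_Gamma_add_div_Gamma_rpow {α β γ δ q : ℝ} (hα : 0 < α)
    (hγ : 1 < γ) (hq : 0 ≤ q) (hδ : δ ≤ 1) :
    Summable fun k : ℕ ↦ k * q ^ k * Gamma (α * k + β + δ) / Gamma (α * k + β) ^ γ := by
  have ha : Tendsto (fun k : ℕ ↦ α * k + β) atTop atTop :=
    tendsto_atTop_add_const_right _ β (tendsto_natCast_atTop_atTop.const_mul_atTop hα)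
  refine (summable_natCast_mul_pow_mul_div_Gamma_rpow (β := β) hα hγ hq
    ).of_norm_bounded_eventually_nat ?_
  filter_upwards [ha.eventually_ge_atTop (2 - δ)] with k hk
  have hk0 : 0 < α * k + β := by linarith
  have hΓ : 0 < Gamma (α * k + β) := Gamma_pos_of_pos hk0
  have hΓδ : 0 < Gamma (α * k + β + δ) := Gamma_pos_of_pos (by linarith)
  rw [norm_of_nonneg (by positivity)]
  calc k * q ^ k * Gamma (α * k + β + δ) / Gamma (α * k + β) ^ γ
      ≤ k * q ^ k * ((α * k + β) * Gamma (α * k + β)) / Gamma (α * k + β) ^ γ := by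
        gcongr; exact Gamma_add_le_mul_Gamma (by linarith) hδ
    _ = _ := by rw [rpow_sub_one hΓ.ne']; field_simp

end GammaGrowth

/-- `∂/∂a (t ^ (a - 1) / Γ(a) ^ γ)`; the `k`-th term of the integrand is `k λ ^ k` times it at
`a = α k + β`. -/
noncomputable def leRoyKernel (γ a t : ℝ) : ℝ :=
  t ^ (a - 1) * (log t - γ * digamma a) / Gamma a ^ γ

section LeRoyKernel

variable {γ a s : ℝ}

lemma exp_neg_mul_mul_leRoyKernel (t : ℝ) :
    exp (-(s * t)) * leRoyKernel γ a t
      = (t ^ (a - 1) * exp (-(s * t)) * log t - γ * digamma a * (t ^ (a - 1) * exp (-(s * t))))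
        / Gamma a ^ γ := by
  unfold leRoyKernel; ring

lemma integrableOn_exp_neg_mul_mul_leRoyKernel (ha : 0 < a) (hs : 0 < s) :
    IntegrableOn (fun t ↦ exp (-(s * t)) * leRoyKernel γ a t) (Ioi 0) := by
  simp only [exp_neg_mul_mul_leRoyKernel]
  exact ((integrableOn_rpow_mul_exp_neg_mul_mul_log ha hs).sub
    ((integrableOn_rpow_mul_exp_neg_mul ha hs).const_mul _)).div_const _

lemma integral_exp_neg_mul_mul_leRoyKernel (ha : 0 < a) (hs : 0 < s) :
    ∫ t in Ioi 0, exp (-(s * t)) * leRoyKernel γ a t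
      = -((1 / s) ^ a * (log s + (γ - 1) * digamma a) / Gamma a ^ (γ - 1)) := by
  have hΓ := Gamma_pos_of_pos ha
  simp only [exp_neg_mul_mul_leRoyKernel]
  rw [integral_div, integral_sub (integrableOn_rpow_mul_exp_neg_mul_mul_log ha hs)
    ((integrableOn_rpow_mul_exp_neg_mul ha hs).const_mul _), integral_const_mul,
    integral_rpow_mul_exp_neg_mul_mul_log ha hs, integral_rpow_mul_exp_neg_mul_Ioi ha hs,
    rpow_sub_one hΓ.ne']
  field_simp
  ring

lemma integral_norm_exp_neg_mul_mul_leRoyKernel_le {ε : ℝ} (hγ : 0 ≤ γ) (hs : 0 < s)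
    (hε : 0 < ε) (hεa : ε < a) :
    ∫ t in Ioi 0, ‖exp (-(s * t)) * leRoyKernel γ a t‖
      ≤ (((1 / s) ^ (a + ε) + γ * (1 / s) ^ a) * Gamma (a + ε)
          + ((1 / s) ^ (a - ε) + γ * (1 / s) ^ a) * Gamma (a - ε)) / ε / Gamma a ^ γ := by
  have ha : 0 < a := hε.trans hεa
  have hlog := integrableOn_rpow_mul_exp_neg_mul_mul_log ha hs
  have hpow := (integrableOn_rpow_mul_exp_neg_mul ha hs).const_mul (γ * |digamma a|)
  have hψ := abs_digamma_mul_Gamma_le hε hεa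
  calc ∫ t in Ioi 0, ‖exp (-(s * t)) * leRoyKernel γ a t‖
      ≤ ∫ t in Ioi 0, (|t ^ (a - 1) * exp (-(s * t)) * log t|
          + γ * |digamma a| * (t ^ (a - 1) * exp (-(s * t)))) / Gamma a ^ γ := by
        refine setIntegral_mono_on (integrableOn_exp_neg_mul_mul_leRoyKernel ha hs).norm
          ((hlog.abs.add hpow).div_const _) measurableSet_Ioi fun t ht ↦ ?_
        have hpos : 0 < t ^ (a - 1) * exp (-(s * t)) := by
          have := rpow_pos_of_pos (mem_Ioi.mp ht) (a - 1); positivity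
        rw [exp_neg_mul_mul_leRoyKernel, norm_div, norm_of_nonneg (by positivity : 0 ≤ Gamma a ^ γ),
          Real.norm_eq_abs]
        gcongr
        refine (abs_sub _ _).trans_eq ?_
        rw [abs_mul (γ * digamma a), abs_mul γ, abs_of_nonneg hγ, abs_of_pos hpos]
    _ = ((∫ t in Ioi 0, |t ^ (a - 1) * exp (-(s * t)) * log t|)
          + γ * (1 / s) ^ a * (|digamma a| * Gamma a)) / Gamma a ^ γ := by
        rw [integral_div, integral_add hlog.abs hpow, integral_const_mul,
          integral_rpow_mul_exp_neg_mul_Ioi ha hs]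
        ring
    _ ≤ _ := by
        gcongr
        calc _ ≤ ((1 / s) ^ (a + ε) * Gamma (a + ε) + (1 / s) ^ (a - ε) * Gamma (a - ε)) / ε
              + γ * (1 / s) ^ a * ((Gamma (a + ε) + Gamma (a - ε)) / ε) := by
              gcongr
              exact integral_abs_rpow_mul_exp_neg_mul_mul_log_le hs hε hεa
          _ = _ := by ring

end LeRoyKernel

lemma integral_exp_neg_mul_mul_leRoy_term {α β γ s : ℝ} (lam : ℝ) (k : ℕ) (hα : 0 < α)
    (hβ : 0 < β) (hs : 0 < s) :
    ∫ t in Ioi 0, exp (-(s * t)) * (k * lam ^ k * leRoyKernel γ (α * k + β) t)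
      = -(1 / s ^ β * (k * (lam * s ^ (-α)) ^ k
          * (log s + (γ - 1) * digamma (α * k + β)) / Gamma (α * k + β) ^ (γ - 1))) := by
  have hpow : (1 / s) ^ (α * k + β) = (s ^ (-α)) ^ k * (1 / s ^ β) := by
    rw [rpow_add (by positivity), rpow_mul_natCast (by positivity), one_div, inv_rpow hs.le,
      inv_rpow hs.le, ← rpow_neg hs.le, one_div (s ^ β)]
  simp_rw [mul_left_comm (exp _)]
  rw [integral_const_mul, integral_exp_neg_mul_mul_leRoyKernel (by positivity) hs, hpow]
  ring

lemma summable_integral_norm_exp_neg_mul_mul_leRoy_term {α β γ s : ℝ} (lam : ℝ) (hα : 0 < α)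
    (hβ : 0 < β) (hγ : 1 < γ) (hs : 0 < s) :
    Summable fun k : ℕ ↦
      ∫ t in Ioi 0, ‖exp (-(s * t)) * (k * lam ^ k * leRoyKernel γ (α * k + β) t)‖ := by
  obtain ⟨ε, hε, hεβ, hε1⟩ : ∃ ε : ℝ, 0 < ε ∧ ε < β ∧ ε ≤ 1 :=
    ⟨min β 1 / 2, by positivity, by linarith [min_le_left β 1], by linarith [min_le_right β 1]⟩
  set x := 1 / s
  have hx : 0 < x := by positivity
  set q := |lam| * x ^ α
  have hpow : ∀ (k : ℕ) (b : ℝ), x ^ (α * k + b) = (x ^ α) ^ k * x ^ b := fun k b ↦ by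
    rw [rpow_add hx, rpow_mul_natCast hx.le]
  have hmajorant := ((summable_natCast_mul_pow_mul_Gamma_add_div_Gamma_rpow (β := β) hα hγ
      (by positivity : 0 ≤ q) hε1).mul_left (x ^ (β + ε) + γ * x ^ β)).add
    ((summable_natCast_mul_pow_mul_Gamma_add_div_Gamma_rpow (β := β) hα hγ
      (by positivity : 0 ≤ q) (by linarith : -ε ≤ 1)).mul_left (x ^ (β + -ε) + γ * x ^ β))
  refine Summable.of_nonneg_of_le (fun k ↦ integral_nonneg fun t ↦ norm_nonneg _)
    (fun k ↦ ?_) (hmajorant.div_const ε)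
  have hεa : ε < α * k + β := lt_add_of_nonneg_of_lt (by positivity) hεβ
  calc ∫ t in Ioi 0, ‖exp (-(s * t)) * (k * lam ^ k * leRoyKernel γ (α * k + β) t)‖
      = k * |lam| ^ k * ∫ t in Ioi 0, ‖exp (-(s * t)) * leRoyKernel γ (α * k + β) t‖ := by
        rw [← integral_const_mul]
        congr 1 with t
        rw [mul_left_comm, norm_mul, norm_mul, norm_pow, Real.norm_natCast, Real.norm_eq_abs]
    _ ≤ k * |lam| ^ k * ((((x ^ (α * k + β + ε) + γ * x ^ (α * k + β)) * Gamma (α * k + β + ε)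
          + (x ^ (α * k + β - ε) + γ * x ^ (α * k + β)) * Gamma (α * k + β - ε)) / ε)
          / Gamma (α * k + β) ^ γ) := by
        gcongr
        exact integral_norm_exp_neg_mul_mul_leRoyKernel_le (by linarith) hs hε hεa
    _ = _ := by
        rw [sub_eq_add_neg, add_assoc, add_assoc, hpow, hpow, hpow, mul_pow]
        simp only [← add_assoc]
        ring

theorem laplace_deriv_alpha_LeRoy (α β γ lam s : ℝ) (hα : 0 < α) (hβ : 0 < β)
    (hγ : 1 < γ) (hs : 0 < s) :
    (∫ t in Set.Ioi (0 : ℝ), Real.exp (-(s * t)) *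
        ∑' k : ℕ, (k : ℝ) * lam ^ k * t ^ (α * k + β - 1) *
          (Real.log t - γ * digamma (α * k + β)) / Real.Gamma (α * k + β) ^ γ)
      = -((1 / s ^ β) *
          ∑' k : ℕ, (k : ℝ) * (lam * s ^ (-α)) ^ k *
            (Real.log s + (γ - 1) * digamma (α * k + β)) /
              Real.Gamma (α * k + β) ^ (γ - 1)) := by
  have hterm : ∀ (k : ℕ) (t : ℝ), (k : ℝ) * lam ^ k * t ^ (α * k + β - 1)
      * (log t - γ * digamma (α * k + β)) / Gamma (α * k + β) ^ γ
        = k * lam ^ k * leRoyKernel γ (α * k + β) t := fun k t ↦ by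
    unfold leRoyKernel; ring
  have hint : ∀ k : ℕ, IntegrableOn
      (fun t ↦ exp (-(s * t)) * (k * lam ^ k * leRoyKernel γ (α * k + β) t)) (Ioi 0) :=
    fun k ↦ IntegrableOn.congr_fun
      ((integrableOn_exp_neg_mul_mul_leRoyKernel (by positivity) hs).const_mul (k * lam ^ k))
      (fun t _ ↦ mul_left_comm _ _ _) measurableSet_Ioi
  simp_rw [hterm, ← tsum_mul_left]
  rw [← integral_tsum_of_summable_integral_norm hint
    (summable_integral_norm_exp_neg_mul_mul_leRoy_term lam hα hβ hγ hs), ← tsum_neg]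
  exact tsum_congr fun k ↦ integral_exp_neg_mul_mul_leRoy_term lam k hα hβ hs
end

section
/- Let α > 0, β > 0, γ > 1, λ ∈ ℝ, and let s > 0 be a real number. Then ∫₀^∞ e^{−st} · (∑_{k=0}^∞ (− ln Γ(αk+β)) · λ^k · t^{αk+β−1} / Γ(αk+β)^γ) dt = − (1/s^β) · ∑_{k=0}^∞ (λ · s^{−α})^k · ln Γ(αk+β) / Γ(αk+β)^{γ−1}. (The integrand series is the term-by-term derivative with respect to γ of t^{β−1} F^{(γ)}_{α,β}(λ t^α).) -/
/-!
Integrate term by term: the Laplace transform of `t ^ (a - 1)` is `Γ(a) / s ^ a`, and swapping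
`∫` and `∑'` is justified once the series of these transforms converges absolutely. That series
is `∑ (λ s^(-α))^k log Γ(αk+β) / Γ(αk+β)^(γ-1)`, which converges for every `λ`: log-convexity of
`Γ` gives `Γ(x + α) ≥ (x - 1)^α Γ(x)`, so the ratio test beats any geometric factor, and
`log Γ ≤ Γ^ε / ε` absorbs the logarithm.
-/

open Real MeasureTheory

open Filter Topology Set

theorem tendsto_mul_natCast_add_atTop {α : ℝ} (hα : 0 < α) (β : ℝ) :
    Tendsto (fun k : ℕ => α * k + β) atTop atTop :=
  tendsto_atTop_add_const_right _ β (tendsto_natCast_atTop_atTop.const_mul_atTop hα)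

namespace Real

theorem rpow_mul_Gamma_le_Gamma_add {x a : ℝ} (hx : 1 < x) (ha : 0 < a) :
    (x - 1) ^ a * Gamma x ≤ Gamma (x + a) := by
  have hx₁ : 0 < x - 1 := by linarith
  have hxa : 0 < x + a := by linarith
  have hrec : log (Gamma x) - log (Gamma (x - 1)) = log (x - 1) := by
    rw [← log_div (Gamma_pos_of_pos (by linarith)).ne' (Gamma_pos_of_pos hx₁).ne',
      ← sub_add_cancel x 1, Gamma_add_one hx₁.ne', add_sub_cancel_right,
      mul_div_cancel_right₀ _ (Gamma_pos_of_pos hx₁).ne']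
  have hslope := convexOn_log_Gamma.slope_mono_adjacent (mem_Ioi.2 hx₁) (mem_Ioi.2 hxa)
    (by linarith : x - 1 < x) (by linarith : x < x + a)
  simp only [Function.comp_apply, sub_sub_cancel, add_sub_cancel_left, div_one] at hslope
  rw [le_div_iff₀ ha, hrec] at hslope
  rw [← log_le_log_iff (by positivity) (Gamma_pos_of_pos hxa),
    log_mul (by positivity) (Gamma_pos_of_pos (by linarith)).ne', log_rpow hx₁]
  linarith

theorem one_le_Gamma_of_two_le {x : ℝ} (hx : 2 ≤ x) : 1 ≤ Gamma x :=
  Gamma_two ▸ Gamma_strictMonoOn_Ici.monotoneOn self_mem_Ici hx hx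

theorem tendsto_Gamma_div_Gamma_add_atTop {a : ℝ} (ha : 0 < a) :
    Tendsto (fun x => Gamma x / Gamma (x + a)) atTop (𝓝 0) := by
  have hlim : Tendsto (fun x : ℝ => (x - 1) ^ (-a)) atTop (𝓝 0) :=
    (tendsto_rpow_neg_atTop ha).comp (tendsto_atTop_add_const_right _ (-1) tendsto_id)
  refine tendsto_of_tendsto_of_tendsto_of_le_of_le' tendsto_const_nhds hlim ?_ ?_
  · filter_upwards [eventually_gt_atTop 0] with x hx
    exact div_nonneg (Gamma_pos_of_pos hx).le (Gamma_pos_of_pos (by linarith)).le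
  · filter_upwards [eventually_gt_atTop 1] with x hx
    have hx₁ : 0 < x - 1 := by linarith
    rw [div_le_iff₀ (Gamma_pos_of_pos (by linarith)), rpow_neg hx₁.le, inv_mul_eq_div,
      le_div_iff₀' (by positivity)]
    exact rpow_mul_Gamma_le_Gamma_add hx ha

theorem summable_pow_div_Gamma_rpow (x : ℝ) {α ε : ℝ} (hα : 0 < α) (hε : 0 < ε)
    (β : ℝ) :
    Summable fun k : ℕ => x ^ k / Gamma (α * k + β) ^ ε := by
  have hlin := tendsto_mul_natCast_add_atTop hα β
  have hratio : Tendsto (fun k : ℕ => |x| * (Gamma (α * k + β) / Gamma (α * k + β + α)) ^ ε)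
      atTop (𝓝 0) := by
    simpa [zero_rpow hε.ne'] using
      (((tendsto_Gamma_div_Gamma_add_atTop hα).comp hlin).rpow_const (Or.inr hε.le)).const_mul |x|
  refine summable_of_ratio_norm_eventually_le (r := 1 / 2) (by norm_num) ?_
  filter_upwards [hratio.eventually (ge_mem_nhds (by norm_num : (0 : ℝ) < 1 / 2)),
    hlin.eventually_gt_atTop 0] with k hk hpos
  have hΓ := Gamma_pos_of_pos hpos
  have hΓ' := Gamma_pos_of_pos (by linarith : 0 < α * k + β + α)
  have hshift : α * ↑(k + 1) + β = α * k + β + α := by push_cast; ring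
  calc ‖x ^ (k + 1) / Gamma (α * ↑(k + 1) + β) ^ ε‖
      = |x| * (Gamma (α * k + β) / Gamma (α * k + β + α)) ^ ε *
          ‖x ^ k / Gamma (α * k + β) ^ ε‖ := by
        simp only [hshift, norm_div, norm_pow, Real.norm_eq_abs,
          abs_of_pos (rpow_pos_of_pos hΓ ε),
          abs_of_pos (rpow_pos_of_pos hΓ' ε), div_rpow hΓ.le hΓ'.le]
        field_simp
        ring
    _ ≤ 1 / 2 * ‖x ^ k / Gamma (α * k + β) ^ ε‖ := by gcongr

theorem summable_pow_mul_log_Gamma_div_rpow (x : ℝ) {α δ : ℝ} (hα : 0 < α) (hδ : 0 < δ)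
    (β : ℝ) :
    Summable fun k : ℕ => x ^ k * log (Gamma (α * k + β)) / Gamma (α * k + β) ^ δ := by
  refine ((summable_pow_div_Gamma_rpow x hα (half_pos hδ) β).norm.mul_left
    (2 / δ)).of_norm_bounded_eventually_nat ?_
  filter_upwards [(tendsto_mul_natCast_add_atTop hα β).eventually_ge_atTop 2] with k hk
  set G := Gamma (α * k + β)
  have hG : 1 ≤ G := one_le_Gamma_of_two_le hk
  have hG₀ : 0 < G := by linarith
  have hlog : log G ≤ G ^ (δ / 2) / (δ / 2) := log_le_rpow_div (by linarith) (half_pos hδ)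
  have hsplit : G ^ δ = G ^ (δ / 2) * G ^ (δ / 2) := by rw [← rpow_add hG₀]; ring_nf
  simp only [norm_div, norm_mul, norm_pow, Real.norm_eq_abs, abs_of_nonneg (log_nonneg hG),
    abs_of_pos (rpow_pos_of_pos hG₀ _)]
  calc |x| ^ k * log G / G ^ δ
      ≤ |x| ^ k * (G ^ (δ / 2) / (δ / 2)) / (G ^ (δ / 2) * G ^ (δ / 2)) := by
        rw [hsplit]; gcongr
    _ = 2 / δ * (|x| ^ k / G ^ (δ / 2)) := by field_simp

theorem integral_exp_neg_mul_tsum_mul_rpow {s : ℝ} (hs : 0 < s) {c p : ℕ → ℝ}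
    (hp : ∀ k, 0 < p k) (hsum : Summable fun k => c k * (Gamma (p k) / s ^ p k)) :
    ∫ t in Ioi 0, exp (-(s * t)) * ∑' k, c k * t ^ (p k - 1) =
      ∑' k, c k * (Gamma (p k) / s ^ p k) := by
  set g : ℕ → ℝ → ℝ := fun k t => t ^ (p k - 1) * exp (-(s * t))
  have hg_integral (k : ℕ) : ∫ t in Ioi 0, g k t = Gamma (p k) / s ^ p k := by
    rw [integral_rpow_mul_exp_neg_mul_Ioi (hp k) hs, div_rpow zero_le_one hs.le, one_rpow,
      div_mul_eq_mul_div, one_mul]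
  have hg_integrable (k : ℕ) : IntegrableOn (g k) (Ioi 0) := by
    simpa [g] using integrableOn_rpow_mul_exp_neg_mul_rpow (p := 1) (by linarith [hp k]) one_pos hs
  have hg_nonneg (k : ℕ) {t : ℝ} (ht : t ∈ Ioi 0) : 0 ≤ g k t :=
    mul_nonneg (rpow_nonneg (le_of_lt ht) _) (exp_pos _).le
  have hg_norm (k : ℕ) :
      ∫ t in Ioi 0, ‖c k * g k t‖ = ‖c k * (Gamma (p k) / s ^ p k)‖ := by
    rw [← hg_integral, norm_mul,
      Real.norm_of_nonneg (setIntegral_nonneg measurableSet_Ioi fun t ht => hg_nonneg k ht),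
      ← integral_const_mul]
    refine setIntegral_congr_fun measurableSet_Ioi fun t ht => ?_
    rw [norm_mul, Real.norm_of_nonneg (hg_nonneg k ht)]
  calc ∫ t in Ioi 0, exp (-(s * t)) * ∑' k, c k * t ^ (p k - 1)
      = ∫ t in Ioi 0, ∑' k, c k * g k t := by
        refine setIntegral_congr_fun measurableSet_Ioi fun t _ => ?_
        rw [← tsum_mul_left]
        exact tsum_congr fun k => by ring
    _ = ∑' k, ∫ t in Ioi 0, c k * g k t :=
        (integral_tsum_of_summable_integral_norm (fun k => (hg_integrable k).const_mul (c k))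
          (by simpa only [hg_norm] using hsum.norm)).symm
    _ = ∑' k, c k * (Gamma (p k) / s ^ p k) := by
        simp only [integral_const_mul, hg_integral]

end Real

theorem laplace_deriv_gamma_LeRoy (α β γ lam s : ℝ) (hα : 0 < α) (hβ : 0 < β)
    (hγ : 1 < γ) (hs : 0 < s) :
    (∫ t in Set.Ioi (0 : ℝ), Real.exp (-(s * t)) *
        ∑' k : ℕ, (-(Real.log (Real.Gamma (α * k + β)))) * lam ^ k *
          t ^ (α * k + β - 1) / Real.Gamma (α * k + β) ^ γ)
      = -((1 / s ^ β) *
          ∑' k : ℕ, (lam * s ^ (-α)) ^ k * Real.log (Real.Gamma (α * k + β)) /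
            Real.Gamma (α * k + β) ^ (γ - 1)) := by
  have hp (k : ℕ) : 0 < α * k + β := by positivity
  have hterm (k : ℕ) :
      -log (Gamma (α * k + β)) * lam ^ k / Gamma (α * k + β) ^ γ *
          (Gamma (α * k + β) / s ^ (α * k + β)) =
        -(1 / s ^ β) * ((lam * s ^ (-α)) ^ k * log (Gamma (α * k + β)) /
          Gamma (α * k + β) ^ (γ - 1)) := by
    have hΓ := Gamma_pos_of_pos (hp k)
    rw [rpow_add hs, rpow_neg hs.le, rpow_mul_natCast hs.le, rpow_sub_one hΓ.ne', mul_pow, inv_pow]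
    field_simp
  have hsum := (summable_pow_mul_log_Gamma_div_rpow (lam * s ^ (-α)) hα (sub_pos.2 hγ)
    β).mul_left (-(1 / s ^ β))
  simp only [← hterm] at hsum
  calc _ = ∫ t in Ioi 0, exp (-(s * t)) *
        ∑' k : ℕ, -log (Gamma (α * k + β)) * lam ^ k / Gamma (α * k + β) ^ γ *
          t ^ (α * k + β - 1) := by
        refine setIntegral_congr_fun measurableSet_Ioi fun t _ => ?_
        exact congrArg _ (tsum_congr fun k => by ring)
    _ = _ := by
        rw [integral_exp_neg_mul_tsum_mul_rpow hs hp hsum]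
        simp only [hterm]
        rw [tsum_mul_left, neg_mul]
end

section
/- Let α > 0, β > 0 with α + β > 1, let λ ∈ ℝ, and let t > 0. Then ∑_{k=0}^∞ k · λ^k · t^{αk+β−1} · (ln t − ψ(αk+β)) / Γ(αk+β) = λ · ∫₀^t (ln(t − t₁) + γ₀) · t₁^{α+β−2} · (∑_{k=0}^∞ (k+1) · (λ t₁^α)^k / Γ(αk + α + β − 1)) dt₁; that is, the term-by-term derivative with respect to α of t^{β−1} E_{α,β}(λ t^α) equals the convolution λ · ∫₀^t (ln(t−t₁) + γ₀) · t₁^{α+β−2} · E²_{α,α+β−1}(λ t₁^α) dt₁. -/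
open Real MeasureTheory

/-!
Shifting `k ↦ k + 1` and using `Γ(μ + 1) = μ Γ(μ)`, the left-hand side becomes
`λ ∑ (k+1) λ^k / Γ(μ_k) · t^{μ_k} / μ_k · (log t - ψ(μ_k + 1))` with `μ_k = αk + α + β - 1`.
On the right the Mittag-Leffler series may be integrated term by term, since it converges
absolutely (`Γ(y) / Γ(y + α) → 0` by log-convexity of `Γ`), so everything reduces to the kernel
integral `∫₀ᵗ (log (t - s) + γ₀) s^{μ-1} ds = t^μ / μ · (log t - ψ(μ + 1))`. Expanding
`log (1 - s/t)` in powers of `s/t` turns it into `t^μ ∑ 1 / ((n+1)(n+1+μ))`, whose partial sums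
telescope through `ψ(x + 1) = ψ(x) + 1/x` to `(γ₀ + ψ(μ + 1)) / μ`.
-/

open Set Filter Topology

local notation "γ₀" => Real.eulerMascheroniConstant

lemma differentiableAt_log_Gamma {x : ℝ} (hx : 0 < x) :
    DifferentiableAt ℝ (fun y ↦ log (Gamma y)) x :=
  have hx' : ∀ m : ℕ, x ≠ -m := fun m ↦ by linarith [(Nat.cast_nonneg m : (0 : ℝ) ≤ m)]
  (differentiableAt_Gamma hx').log (Gamma_ne_zero hx')

lemma digamma_one : digamma 1 = -γ₀ := by
  have h1 : ∀ m : ℕ, (1 : ℝ) ≠ -m := fun m ↦ by linarith [(Nat.cast_nonneg m : (0 : ℝ) ≤ m)]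
  rw [digamma, deriv.log (differentiableAt_Gamma h1) (Gamma_ne_zero h1), Gamma_one, div_one,
    eulerMascheroniConstant_eq_neg_deriv, neg_neg]

lemma digamma_add_one {x : ℝ} (hx : 0 < x) : digamma (x + 1) = digamma x + x⁻¹ := by
  simp only [digamma]
  rw [← deriv_comp_add_const, ← deriv_log,
    ← deriv_add (differentiableAt_log_Gamma hx) (differentiableAt_log hx.ne')]
  apply EventuallyEq.deriv_eq
  filter_upwards [eventually_gt_nhds hx] with y hy
  rw [Pi.add_apply, Gamma_add_one hy.ne', log_mul hy.ne' (Gamma_pos_of_pos hy).ne', add_comm]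

lemma digamma_add_nat {x : ℝ} (hx : 0 < x) (n : ℕ) :
    digamma (x + n) = digamma x + ∑ i ∈ Finset.range n, (x + i)⁻¹ := by
  induction n with
  | zero => simp
  | succ n ih =>
    rw [Nat.cast_succ, ← add_assoc, digamma_add_one (by positivity), ih, Finset.sum_range_succ,
      add_assoc]

lemma digamma_monotoneOn : MonotoneOn digamma (Ioi 0) := by
  intro a ha b hb hab
  rcases hab.eq_or_lt with rfl | hlt
  · rfl
  have hc := convexOn_log_Gamma
  exact (hc.deriv_le_slope ha hb hlt (differentiableAt_log_Gamma ha)).trans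
    (hc.slope_le_deriv ha hb hlt (differentiableAt_log_Gamma hb))

lemma tendsto_digamma_add_sub_digamma {x μ : ℝ} (hx : 0 < x) (hμ : 0 ≤ μ) :
    Tendsto (fun N : ℕ ↦ digamma (x + N + μ) - digamma (x + N)) atTop (𝓝 0) := by
  set m := ⌈μ⌉₊
  -- monotonicity reduces the shift `μ` to the integer shift `⌈μ⌉`, a finite sum of vanishing terms
  have hbound (N : ℕ) : digamma (x + N + μ) - digamma (x + N) ≤
      ∑ i ∈ Finset.range m, (x + N + i)⁻¹ := by
    rw [← add_sub_cancel_left (digamma (x + N)) (∑ i ∈ Finset.range m, _),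
      ← digamma_add_nat (by positivity)]
    gcongr
    exact digamma_monotoneOn (by simp; positivity) (by simp; positivity)
      (by linarith [Nat.le_ceil μ])
  have hlim : Tendsto (fun N : ℕ ↦ ∑ i ∈ Finset.range m, (x + N + i)⁻¹) atTop (𝓝 0) := by
    rw [← Finset.sum_const_zero (s := Finset.range m)]
    refine tendsto_finsetSum _ fun i _ ↦ tendsto_inv_atTop_zero.comp ?_
    exact tendsto_atTop_add_const_right _ _
      (tendsto_atTop_add_const_left _ _ tendsto_natCast_atTop_atTop)
  refine squeeze_zero (fun N ↦ sub_nonneg.2 ?_) hbound hlim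
  exact digamma_monotoneOn (by simp; positivity) (by simp; positivity) (by linarith)

lemma hasSum_one_div_mul_add_one_add {μ : ℝ} (hμ : 0 < μ) :
    HasSum (fun n : ℕ ↦ 1 / ((n + 1) * (n + 1 + μ))) ((γ₀ + digamma (μ + 1)) / μ) := by
  rw [hasSum_iff_tendsto_nat_of_nonneg (fun n ↦ by positivity)]
  have hpartial (N : ℕ) : ∑ n ∈ Finset.range N, 1 / ((n + 1 : ℝ) * (n + 1 + μ)) =
      ((γ₀ + digamma (μ + 1)) - (digamma (1 + N + μ) - digamma (1 + N))) / μ := by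
    have h1 := digamma_add_nat one_pos N
    have h2 := digamma_add_nat (x := μ + 1) (by positivity) N
    rw [digamma_one] at h1
    have hterm (n : ℕ) :
        1 / ((n + 1 : ℝ) * (n + 1 + μ)) = ((1 + n : ℝ)⁻¹ - (μ + 1 + n)⁻¹) / μ := by
      field_simp
      ring
    rw [show 1 + (N : ℝ) + μ = μ + 1 + N by ring, h1, h2]
    simp only [hterm]
    rw [← Finset.sum_div, Finset.sum_sub_distrib]
    ring
  simp only [hpartial]
  simpa using ((tendsto_digamma_add_sub_digamma one_pos hμ.le).const_sub
    (γ₀ + digamma (μ + 1))).div_const μ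

lemma Gamma_div_Gamma_add_le {y a : ℝ} (hy : 1 < y) (ha : 0 < a) :
    Gamma y / Gamma (y + a) ≤ (y - 1) ^ (-a) := by
  have hy0 : 0 < y - 1 := by linarith
  have hΓ : Gamma y = (y - 1) * Gamma (y - 1) := by
    simpa using Gamma_add_one hy0.ne'
  -- log-convexity of `Γ` compares the slopes over `[y - 1, y]` and `[y, y + a]`
  have hslope := convexOn_log_Gamma.slope_mono_adjacent (mem_Ioi.2 hy0)
    (mem_Ioi.2 (by linarith : 0 < y + a)) (by linarith : y - 1 < y) (by linarith : y < y + a)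
  simp only [Function.comp, sub_sub_cancel, div_one, add_sub_cancel_left, hΓ,
    log_mul hy0.ne' (Gamma_pos_of_pos hy0).ne', add_sub_cancel_right, le_div_iff₀ ha] at hslope
  rw [← log_le_log_iff (by positivity) (by positivity), log_div, log_rpow hy0, hΓ,
    log_mul hy0.ne' (Gamma_pos_of_pos hy0).ne']
  · linarith
  · positivity
  · linarith [(Gamma_pos_of_pos (by linarith : 0 < y + a))]

lemma tendsto_Gamma_div_Gamma_add {a : ℝ} (ha : 0 < a) :
    Tendsto (fun y ↦ Gamma y / Gamma (y + a)) atTop (𝓝 0) := by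
  have hlim : Tendsto (fun y : ℝ ↦ (y - 1) ^ (-a)) atTop (𝓝 0) :=
    (tendsto_rpow_neg_atTop ha).comp (tendsto_atTop_add_const_right _ (-1) tendsto_id)
  refine squeeze_zero' ?_ ?_ hlim
  · filter_upwards [eventually_gt_atTop 0] with y hy
    exact div_nonneg (Gamma_pos_of_pos hy).le (Gamma_pos_of_pos (by linarith)).le
  · filter_upwards [eventually_gt_atTop 1] with y hy
    exact Gamma_div_Gamma_add_le hy ha

lemma summable_pow_div_Gamma {α c : ℝ} (hα : 0 < α) (hc : 0 < c) (z : ℝ) :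
    Summable fun k : ℕ ↦ z ^ k / Gamma (α * k + c) := by
  have hnorm (k : ℕ) : ‖z ^ k / Gamma (α * k + c)‖ = |z| ^ k / Gamma (α * k + c) := by
    rw [norm_div, norm_pow, norm_of_nonneg (Gamma_pos_of_pos (by positivity)).le, norm_eq_abs]
  have hratio := ((tendsto_Gamma_div_Gamma_add hα).comp (tendsto_atTop_add_const_right _ c
    (tendsto_natCast_atTop_atTop.const_mul_atTop hα))).const_mul |z|
  rw [mul_zero] at hratio
  refine summable_of_ratio_norm_eventually_le (r := 1 / 2) (by norm_num) ?_
  filter_upwards [hratio.eventually (eventually_le_nhds (by norm_num : (0 : ℝ) < 1 / 2))] with k hk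
  have hsucc : ‖z ^ (k + 1) / Gamma (α * ↑(k + 1) + c)‖ =
      |z| * (Gamma (α * k + c) / Gamma (α * k + c + α)) * ‖z ^ k / Gamma (α * k + c)‖ := by
    have := (Gamma_pos_of_pos (by positivity : 0 < α * k + c)).ne'
    rw [hnorm, hnorm, Nat.cast_succ, show α * (k + 1 : ℝ) + c = α * k + c + α by ring]
    field_simp
    ring
  rw [hsucc]
  exact mul_le_mul_of_nonneg_right hk (norm_nonneg _)

lemma summable_succ_mul_pow_div_Gamma {α c : ℝ} (hα : 0 < α) (hc : 0 < c) (z : ℝ) :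
    Summable fun k : ℕ ↦ (k + 1) * z ^ k / Gamma (α * k + c) := by
  refine (summable_pow_div_Gamma hα hc (2 * |z|)).of_norm_bounded fun k ↦ ?_
  have hΓ := Gamma_pos_of_pos (by positivity : 0 < α * k + c)
  rw [norm_div, norm_mul, norm_pow, norm_of_nonneg hΓ.le, mul_pow, norm_eq_abs, norm_eq_abs]
  gcongr
  rw [abs_of_nonneg (by positivity)]
  exact_mod_cast Nat.lt_two_pow_self

section LogKernel

variable {t : ℝ}

lemma setIntegral_Ioo_rpow (ht : 0 < t) {ν : ℝ} (hν : -1 < ν) :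
    ∫ s in Ioo 0 t, s ^ ν = t ^ (ν + 1) / (ν + 1) := by
  rw [← integral_Ioc_eq_integral_Ioo, ← intervalIntegral.integral_of_le ht.le,
    integral_rpow (Or.inl hν), zero_rpow (by linarith), sub_zero]

lemma hasSum_rpow_mul_log_one_sub_div {s : ℝ} (hs : 0 < s) (hst : s < t) (μ : ℝ) :
    HasSum (fun n : ℕ ↦ s ^ (μ + n) / ((n + 1) * t ^ (n + 1)))
      (-(s ^ (μ - 1) * log (1 - s / t))) := by
  have ht : 0 < t := hs.trans hst
  have hlog := (hasSum_pow_div_log_of_abs_lt_one (x := s / t)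
    (by rw [abs_of_pos (by positivity), div_lt_one ht]; exact hst)).mul_left (s ^ (μ - 1))
  have hterm : (fun n : ℕ ↦ s ^ (μ + n) / ((n + 1) * t ^ (n + 1))) =
      fun n : ℕ ↦ s ^ (μ - 1) * ((s / t) ^ (n + 1) / (n + 1)) := by
    funext n
    rw [show μ + n = μ - 1 + (n + 1 : ℕ) by push_cast; ring, rpow_add hs, rpow_natCast, div_pow]
    field_simp
  rw [hterm, ← mul_neg]
  exact hlog

variable {μ : ℝ}

lemma setIntegral_neg_rpow_mul_log_one_sub_div (ht : 0 < t) (hμ : 0 < μ) :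
    ∫ s in Ioo 0 t, -(s ^ (μ - 1) * log (1 - s / t)) = t ^ μ * ((γ₀ + digamma (μ + 1)) / μ) := by
  set F : ℕ → ℝ → ℝ := fun n s ↦ s ^ (μ + n) / ((n + 1) * t ^ (n + 1))
  have hexp (n : ℕ) : -1 < μ + n := by linarith [n.cast_nonneg (α := ℝ)]
  have hF_int (n : ℕ) : IntegrableOn (F n) (Ioo 0 t) :=
    ((intervalIntegral.integrableOn_Ioo_rpow_iff ht).2 (hexp n)).div_const _
  have hF_val (n : ℕ) : ∫ s in Ioo 0 t, F n s = t ^ μ * (1 / ((n + 1) * (n + 1 + μ))) := by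
    simp only [F, integral_div]
    rw [setIntegral_Ioo_rpow ht (hexp n), show μ + n + 1 = μ + (n + 1 : ℕ) by push_cast; ring,
      rpow_add ht, rpow_natCast]
    field_simp
    push_cast
    ring
  have hF_norm (n : ℕ) : ∫ s in Ioo 0 t, ‖F n s‖ = ∫ s in Ioo 0 t, F n s :=
    setIntegral_congr_fun measurableSet_Ioo fun s hs ↦ norm_of_nonneg (by
      have := hs.1
      positivity)
  have hsum := (hasSum_one_div_mul_add_one_add hμ).mul_left (t ^ μ)
  have hswap := hasSum_integral_of_summable_integral_norm hF_int
    (by simpa only [hF_norm, hF_val] using hsum.summable)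
  simp only [hF_val] at hswap
  rw [hsum.unique hswap]
  exact setIntegral_congr_fun measurableSet_Ioo fun s hs ↦
    (hasSum_rpow_mul_log_one_sub_div hs.1 hs.2 μ).tsum_eq.symm

lemma integrableOn_rpow_mul_log_one_sub_div (ht : 0 < t) (hμ : 0 < μ) :
    IntegrableOn (fun s ↦ s ^ (μ - 1) * log (1 - s / t)) (Ioo 0 t) := by
  have hpos : 0 < (γ₀ + digamma (μ + 1)) / μ := by
    rw [← (hasSum_one_div_mul_add_one_add hμ).tsum_eq]
    exact (hasSum_one_div_mul_add_one_add hμ).summable.tsum_pos (fun n ↦ by positivity) 0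
      (by positivity)
  -- a nonzero Bochner integral certifies integrability
  have hneg := Integrable.of_integral_ne_zero
    (setIntegral_neg_rpow_mul_log_one_sub_div ht hμ ▸ (mul_pos (rpow_pos_of_pos ht μ) hpos).ne')
  simpa [IntegrableOn] using hneg.neg

lemma log_sub_add_mul_rpow_eq {s : ℝ} (hs : s ∈ Ioo 0 t) (c : ℝ) :
    (log (t - s) + c) * s ^ (μ - 1) =
      (log t + c) * s ^ (μ - 1) - -(s ^ (μ - 1) * log (1 - s / t)) := by
  have ht : 0 < t := hs.1.trans hs.2
  rw [show t - s = t * (1 - s / t) by field_simp,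
    log_mul ht.ne' (by have := (div_lt_one ht).2 hs.2; linarith)]
  ring

lemma integrableOn_log_sub_add_mul_rpow (ht : 0 < t) (hμ : 0 < μ) (c : ℝ) :
    IntegrableOn (fun s ↦ (log (t - s) + c) * s ^ (μ - 1)) (Ioo 0 t) :=
  IntegrableOn.congr_fun
    ((((intervalIntegral.integrableOn_Ioo_rpow_iff ht).2 (by linarith)).const_mul _).sub
      (integrableOn_rpow_mul_log_one_sub_div ht hμ).fun_neg)
    (fun s hs ↦ (log_sub_add_mul_rpow_eq hs c).symm) measurableSet_Ioo

lemma setIntegral_log_sub_add_eulerMascheroni_mul_rpow (ht : 0 < t) (hμ : 0 < μ) :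
    ∫ s in Ioo 0 t, (log (t - s) + γ₀) * s ^ (μ - 1) = t ^ μ / μ * (log t - digamma (μ + 1)) := by
  rw [setIntegral_congr_fun measurableSet_Ioo fun s hs ↦ log_sub_add_mul_rpow_eq hs γ₀,
    integral_sub (((intervalIntegral.integrableOn_Ioo_rpow_iff ht).2 (by linarith)).const_mul _)
      (integrableOn_rpow_mul_log_one_sub_div ht hμ).fun_neg,
    integral_const_mul, setIntegral_Ioo_rpow ht (by linarith), sub_add_cancel,
    setIntegral_neg_rpow_mul_log_one_sub_div ht hμ]
  ring

end LogKernel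

lemma setIntegral_mul_tsum_rpow {K : ℝ → ℝ} {a : ℕ → ℝ} {t α : ℝ} (hα : 0 ≤ α)
    (hK : IntegrableOn K (Ioo 0 t)) (ha : Summable fun k ↦ |a k| * t ^ (α * k)) :
    ∫ s in Ioo 0 t, K s * ∑' k, a k * s ^ (α * k) =
      ∑' k, a k * ∫ s in Ioo 0 t, K s * s ^ (α * k) := by
  have hpow_le (k : ℕ) {s : ℝ} (hs : s ∈ Ioo 0 t) : ‖s ^ (α * k)‖ ≤ t ^ (α * k) := by
    rw [norm_of_nonneg (rpow_nonneg hs.1.le _)]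
    exact rpow_le_rpow hs.1.le hs.2.le (by positivity)
  set F : ℕ → ℝ → ℝ := fun k s ↦ a k * (K s * s ^ (α * k))
  have hF_int (k : ℕ) : IntegrableOn (F k) (Ioo 0 t) :=
    (hK.mul_bdd (measurable_id.pow_const _).aestronglyMeasurable
      ((ae_restrict_iff' measurableSet_Ioo).2 (.of_forall fun s ↦ hpow_le k))).const_mul _
  have hF_norm (k : ℕ) :
      ∫ s in Ioo 0 t, ‖F k s‖ ≤ |a k| * t ^ (α * k) * ∫ s in Ioo 0 t, ‖K s‖ := by
    rw [← integral_const_mul]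
    refine setIntegral_mono_on (hF_int k).norm (hK.norm.const_mul _) measurableSet_Ioo
      fun s hs ↦ ?_
    rw [norm_mul, norm_mul, norm_eq_abs (a k), mul_assoc, mul_comm (t ^ _)]
    gcongr
    exact hpow_le k hs
  have hswap := integral_tsum_of_summable_integral_norm hF_int
    ((ha.mul_right _).of_nonneg_of_le (fun k ↦ integral_nonneg fun _ ↦ norm_nonneg _) hF_norm)
  simp only [F, integral_const_mul] at hswap
  rw [hswap]
  congr 1 with s
  simp_rw [mul_left_comm (a _), tsum_mul_left]

lemma tsum_nat_mul_rpow_mul_log_sub_digamma_div_Gamma {α β : ℝ} (hα : 0 ≤ α) (hαβ : 1 < α + β)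
    (lam t : ℝ) :
    ∑' k : ℕ, (k : ℝ) * lam ^ k * t ^ (α * k + β - 1) *
        (log t - digamma (α * k + β)) / Gamma (α * k + β) =
      lam * ∑' k : ℕ, (k + 1) * lam ^ k / Gamma (α * k + (α + β - 1)) *
        (t ^ (α * k + (α + β - 1)) / (α * k + (α + β - 1)) *
          (log t - digamma (α * k + (α + β - 1) + 1))) := by
  rw [← tsum_mul_left, ← Nat.succ_injective.tsum_eq (fun k hk ↦ ?_)]
  · refine tsum_congr fun k ↦ ?_
    have hμ : 0 < α * k + (α + β - 1) := by positivity
    rw [show α * (k.succ : ℕ) + β - 1 = α * k + (α + β - 1) by push_cast; ring,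
      show α * (k.succ : ℕ) + β = α * k + (α + β - 1) + 1 by push_cast; ring,
      Gamma_add_one hμ.ne', Nat.cast_succ, pow_succ]
    have := (Gamma_pos_of_pos hμ).ne'
    field_simp
  · cases k with
    | zero => simp at hk
    | succ n => exact ⟨n, rfl⟩

lemma intervalIntegral_mul_tsum_eq_setIntegral {α β lam t : ℝ} (ht : 0 < t) :
    ∫ s in (0 : ℝ)..t, (log (t - s) + γ₀) * s ^ (α + β - 2) *
        ∑' k : ℕ, ((k : ℝ) + 1) * (lam * s ^ α) ^ k / Gamma (α * k + α + β - 1) =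
      ∫ s in Ioo 0 t, (log (t - s) + γ₀) * s ^ (α + β - 1 - 1) *
        ∑' k : ℕ, (k + 1) * lam ^ k / Gamma (α * k + (α + β - 1)) * s ^ (α * k) := by
  rw [intervalIntegral.integral_of_le ht.le, integral_Ioc_eq_integral_Ioo]
  refine setIntegral_congr_fun measurableSet_Ioo fun s hs ↦ ?_
  rw [show α + β - 1 - 1 = α + β - 2 by ring]
  congr 1
  refine tsum_congr fun k ↦ ?_
  rw [mul_pow, ← rpow_natCast (s ^ α), ← rpow_mul hs.1.le,
    show α * (k : ℝ) + α + β - 1 = α * k + (α + β - 1) by ring]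
  ring

theorem deriv_alpha_ML_convolution_general (α β lam t : ℝ) (hα : 0 < α)
    (hαβ : 1 < α + β) (ht : 0 < t) :
    (∑' k : ℕ, (k : ℝ) * lam ^ k * t ^ (α * k + β - 1) *
        (Real.log t - digamma (α * k + β)) / Real.Gamma (α * k + β))
      = lam * ∫ t₁ in (0 : ℝ)..t,
          (Real.log (t - t₁) + Real.eulerMascheroniConstant) * t₁ ^ (α + β - 2) *
            ∑' k : ℕ, ((k : ℝ) + 1) * (lam * t₁ ^ α) ^ k /
              Real.Gamma (α * k + α + β - 1) := by
  have hμ (k : ℕ) : 0 < α * k + (α + β - 1) := by positivity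
  have hsummable : Summable fun k : ℕ ↦
      |(k + 1) * lam ^ k / Gamma (α * k + (α + β - 1))| * t ^ (α * k) := by
    refine (summable_succ_mul_pow_div_Gamma hα (c := α + β - 1) (by linarith)
      (|lam| * t ^ α)).congr fun k ↦ ?_
    rw [abs_div, abs_mul, abs_pow, abs_of_pos (Gamma_pos_of_pos (hμ k)),
      abs_of_pos (k.cast_add_one_pos : (0 : ℝ) < k + 1), mul_pow, ← rpow_natCast (t ^ α),
      ← rpow_mul ht.le]
    ring
  rw [tsum_nat_mul_rpow_mul_log_sub_digamma_div_Gamma hα.le hαβ,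
    intervalIntegral_mul_tsum_eq_setIntegral ht,
    setIntegral_mul_tsum_rpow hα.le (integrableOn_log_sub_add_mul_rpow ht (by linarith) γ₀)
      hsummable]
  refine congrArg (lam * ·) (tsum_congr fun k ↦ ?_)
  rw [← setIntegral_log_sub_add_eulerMascheroni_mul_rpow ht (hμ k)]
  refine congrArg (_ * ·) (setIntegral_congr_fun measurableSet_Ioo fun s hs ↦ ?_)
  rw [mul_assoc, ← rpow_add hs.1]
  ring_nf

theorem deriv_alpha_ML_convolution (α β lam t : ℝ) (hα : 0 < α) (hβ : 0 < β)
    (hαβ : 1 < α + β) (ht : 0 < t) :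
    (∑' k : ℕ, (k : ℝ) * lam ^ k * t ^ (α * k + β - 1) *
        (Real.log t - digamma (α * k + β)) / Real.Gamma (α * k + β))
      = lam * ∫ t₁ in (0 : ℝ)..t,
          (Real.log (t - t₁) + Real.eulerMascheroniConstant) * t₁ ^ (α + β - 2) *
            ∑' k : ℕ, ((k : ℝ) + 1) * (lam * t₁ ^ α) ^ k /
              Real.Gamma (α * k + α + β - 1) :=
  deriv_alpha_ML_convolution_general α β lam t hα hαβ ht
end
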